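/- arXiv:1104.5658 — 5 statements merged into one kernel-verified Lean document; each statement's English description precedes it below -/
import Mathlib

section
/- Let D be an m×m real irreducible matrix with d_ii ≥ 0, d_ij ≤ 0 for i ≠ j, and all row sums equal to zero. Then there exists a vector Λ ∈ R^m with Λ_i > 0 for all i and Dᵀ Λ = 0. -/
def MatIrreducible {m : ℕ} (D : Matrix (Fin m) (Fin m) ℝ) : Prop :=
  ∀ I : Finset (Fin m), I.Nonempty → I ≠ Finset.univ → ∃ i ∈ I, ∃ j, j ∉ I ∧ D i j ≠ 0

/-!
Since `D *ᵥ 1 = 0`, the matrix is singular, so it has a nonzero left null vector `v`, which may be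
taken to have a positive entry. Its positive part `v⁺` still satisfies `v⁺ ᵥ* D ≤ 0`: off the
diagonal `D i j ≤ 0`, so if `v j > 0` raising `v i` to `v⁺ i` (`i ≠ j`) can only lower
`∑ i, v i * D i j = 0`, and if `v j ≤ 0` only nonpositive terms remain. The entries of
`v⁺ ᵥ* D` sum to `v⁺ ⬝ᵥ D *ᵥ 1 = 0`, so `v⁺ ᵥ* D = 0`. Finally, if the nonnegative left null vector
`v⁺` vanished somewhere, irreducibility would give an edge `i → j` from its support to a zero `j`,
and the `j`-th entry of `v⁺ ᵥ* D` would be at most `v⁺ i * D i j < 0`.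
-/

open Matrix Finset

lemma mul_le_zero_of_apply_eq_zero {ι : Type*} {D : Matrix ι ι ℝ}
    (hoff : ∀ i j, i ≠ j → D i j ≤ 0) {μ : ι → ℝ} (hμ : 0 ≤ μ) {j : ι} (hj : μ j = 0) (i : ι) :
    μ i * D i j ≤ 0 := by
  rcases eq_or_ne i j with rfl | hij
  · simp [hj]
  · exact mul_nonpos_of_nonneg_of_nonpos (hμ i) (hoff i j hij)

section

variable {ι : Type*} [Fintype ι] {D : Matrix ι ι ℝ}

lemma mulVec_one_eq_zero_of_row_sum (hrow : ∀ i, ∑ j, D i j = 0) : D *ᵥ 1 = 0 :=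
  funext fun i => by simpa [mulVec, dotProduct] using hrow i

lemma posPart_vecMul_le_zero (hoff : ∀ i j, i ≠ j → D i j ≤ 0) {v : ι → ℝ}
    (hv : v ᵥ* D = 0) : v⁺ ᵥ* D ≤ 0 := by
  intro j
  change ∑ i, v⁺ i * D i j ≤ 0
  rcases le_or_gt (v j) 0 with hj | hj
  · exact sum_nonpos fun i _ =>
      mul_le_zero_of_apply_eq_zero hoff (posPart_nonneg v) (posPart_of_nonpos hj) i
  · calc ∑ i, v⁺ i * D i j ≤ ∑ i, v i * D i j := sum_le_sum fun i _ => ?_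
      _ = 0 := congrFun hv j
    rcases eq_or_ne i j with rfl | hij
    · rw [Pi.posPart_apply, posPart_of_nonneg hj.le]
    · exact mul_le_mul_of_nonpos_right (le_posPart v i) (hoff i j hij)

lemma sum_vecMul_eq_zero (hrow : ∀ i, ∑ j, D i j = 0) (v : ι → ℝ) : ∑ j, (v ᵥ* D) j = 0 := by
  rw [← dotProduct_one, ← dotProduct_mulVec, mulVec_one_eq_zero_of_row_sum hrow, dotProduct_zero]

lemma vecMul_eq_zero_of_le_zero (hrow : ∀ i, ∑ j, D i j = 0) {v : ι → ℝ} (hle : v ᵥ* D ≤ 0) :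
    v ᵥ* D = 0 :=
  funext fun j =>
    (sum_eq_zero_iff_of_nonpos fun j _ => hle j).1 (sum_vecMul_eq_zero hrow v) j (mem_univ j)

lemma exists_nonneg_ne_zero_vecMul_eq_zero [Nonempty ι] (hoff : ∀ i j, i ≠ j → D i j ≤ 0)
    (hrow : ∀ i, ∑ j, D i j = 0) : ∃ μ : ι → ℝ, 0 ≤ μ ∧ μ ≠ 0 ∧ μ ᵥ* D = 0 := by
  classical
  have hdet : D.det = 0 :=
    exists_mulVec_eq_zero_iff.1 ⟨1, one_ne_zero, mulVec_one_eq_zero_of_row_sum hrow⟩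
  obtain ⟨v, hv0, hv⟩ := exists_vecMul_eq_zero_iff.2 hdet
  obtain ⟨i, hi⟩ := Function.ne_iff.1 hv0
  wlog hpos : 0 < v i generalizing v
  · refine this (-v) (neg_ne_zero.2 hv0) (by rw [neg_vecMul, hv, neg_zero]) (by simpa using hi) ?_
    simpa using lt_of_le_of_ne (not_lt.1 hpos) hi
  refine ⟨v⁺, posPart_nonneg v, fun h => ?_, vecMul_eq_zero_of_le_zero hrow
    (posPart_vecMul_le_zero hoff hv)⟩
  exact (posPart_pos hpos).ne' (congrFun h i)

end

lemma pos_of_nonneg_of_vecMul_eq_zero {m : ℕ} {D : Matrix (Fin m) (Fin m) ℝ}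
    (hoff : ∀ i j, i ≠ j → D i j ≤ 0) (hirr : MatIrreducible D) {μ : Fin m → ℝ} (hμ : 0 ≤ μ)
    (hμ0 : μ ≠ 0) (hker : μ ᵥ* D = 0) (i : Fin m) : 0 < μ i := by
  classical
  by_contra! hi
  set I := univ.filter fun k => 0 < μ k
  have hI : I.Nonempty := by
    obtain ⟨k, hk⟩ := Function.ne_iff.1 hμ0
    exact ⟨k, by simpa [I] using lt_of_le_of_ne (hμ k) (Ne.symm hk)⟩
  have hIu : I ≠ univ := fun h =>
    hi.not_gt (mem_filter.1 (h.symm ▸ mem_univ i : i ∈ I)).2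
  obtain ⟨k, hk, j, hj, hD⟩ := hirr I hI hIu
  have hμk : 0 < μ k := by simpa [I] using hk
  have hμj : μ j = 0 := le_antisymm (by simpa [I] using hj) (hμ j)
  have hsum : ∑ l, μ l * D l j = 0 := congrFun hker j
  have hterm : μ k * D k j = 0 :=
    (sum_eq_zero_iff_of_nonpos fun l _ => mul_le_zero_of_apply_eq_zero hoff hμ hμj l).1
      hsum k (mem_univ k)
  exact hD ((mul_eq_zero.1 hterm).resolve_left hμk.ne')

theorem exists_positive_left_kernel_general {m : ℕ}
    (D : Matrix (Fin m) (Fin m) ℝ)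
    (hoff : ∀ i j, i ≠ j → D i j ≤ 0)
    (hrow : ∀ i, ∑ j, D i j = 0)
    (hirr : MatIrreducible D) :
    ∃ Λ : Fin m → ℝ, (∀ i, 0 < Λ i) ∧ D.transpose.mulVec Λ = 0 := by
  rcases isEmpty_or_nonempty (Fin m) with _ | _
  · exact ⟨0, isEmptyElim, Subsingleton.elim _ _⟩
  obtain ⟨μ, hμ, hμ0, hker⟩ := exists_nonneg_ne_zero_vecMul_eq_zero hoff hrow
  exact ⟨μ, pos_of_nonneg_of_vecMul_eq_zero hoff hirr hμ hμ0 hker, by rwa [mulVec_transpose]⟩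

/-- An irreducible matrix with nonnegative diagonal, nonpositive off-diagonal entries and
zero row sums admits a strictly positive vector `Λ` with `Dᵀ Λ = 0`. -/
theorem exists_positive_left_kernel {m : ℕ}
    (D : Matrix (Fin m) (Fin m) ℝ)
    (hdiag : ∀ i, 0 ≤ D i i)
    (hoff : ∀ i j, i ≠ j → D i j ≤ 0)
    (hrow : ∀ i, ∑ j, D i j = 0)
    (hirr : MatIrreducible D) :
    ∃ Λ : Fin m → ℝ, (∀ i, 0 < Λ i) ∧ D.transpose.mulVec Λ = 0 :=
  exists_positive_left_kernel_general D hoff hrow hirr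
end

section
/- Let D(x) = (d_ij(x)) be a family of m×m matrices whose entries are continuous real-valued functions on a compact set E, such that for each x ∈ E the matrix D(x) has nonnegative diagonal entries, nonpositive off-diagonal entries, zero row sums, and is irreducible. Then there exists a continuous map Λ : E → R^m with Λ(x) > 0 componentwise and D(x)ᵀ Λ(x) = 0 for all x ∈ E. -/
open Finset Matrix

namespace Matrix

variable {ι : Type*} [Fintype ι] {D : Matrix ι ι ℝ}

theorem apply_eq_of_isMax_of_mulVec_nonpos (hoff : ∀ i j, i ≠ j → D i j ≤ 0)
    (hrow : ∀ i, ∑ j, D i j = 0) {w : ι → ℝ} {i j : ι} (hmax : ∀ l, w l ≤ w i)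
    (hDw : (D *ᵥ w) i ≤ 0) (hij : D i j ≠ 0) : w j = w i := by
  have hsum : (D *ᵥ w) i = ∑ l, D i l * (w l - w i) := by
    simp only [mulVec, dotProduct, mul_sub, sum_sub_distrib, ← sum_mul, hrow, zero_mul, sub_zero]
  have hterm : ∀ l ∈ univ, 0 ≤ D i l * (w l - w i) := by
    intro l _
    rcases eq_or_ne i l with rfl | hil
    · simp
    · exact mul_nonneg_of_nonpos_of_nonpos (hoff i l hil) (sub_nonpos.2 (hmax l))
  have hzero := (sum_eq_zero_iff_of_nonneg hterm).1 (le_antisymm (hsum ▸ hDw) (sum_nonneg hterm))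
  exact sub_eq_zero.1 ((mul_eq_zero.1 (hzero j (mem_univ j))).resolve_left hij)

theorem det_eq_zero_of_sum_row_eq_zero [DecidableEq ι] [Nonempty ι]
    (hrow : ∀ i, ∑ j, D i j = 0) : D.det = 0 := by
  refine exists_mulVec_eq_zero_iff.1 ⟨fun _ => 1, fun h => ?_, ?_⟩
  · exact one_ne_zero (congrFun h (Classical.arbitrary ι))
  · ext i
    simpa [mulVec, dotProduct] using hrow i

end Matrix

namespace MatIrreducible

variable {m : ℕ} {D : Matrix (Fin m) (Fin m) ℝ}

theorem smul (hirr : MatIrreducible D) {s : ℝ} (hs : s ≠ 0) : MatIrreducible (s • D) := by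
  intro I hI hIu
  obtain ⟨i, hi, j, hj, hij⟩ := hirr I hI hIu
  exact ⟨i, hi, j, hj, by simpa [hs] using hij⟩

theorem apply_eq_of_mulVec_nonpos_at_max (hirr : MatIrreducible D)
    (hoff : ∀ i j, i ≠ j → D i j ≤ 0) (hrow : ∀ i, ∑ j, D i j = 0) {w : Fin m → ℝ}
    (hDw : ∀ i, (∀ l, w l ≤ w i) → (D *ᵥ w) i ≤ 0) (i j : Fin m) : w i = w j := by
  have : Nonempty (Fin m) := ⟨i⟩
  set I := univ.filter fun i => ∀ l, w l ≤ w i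
  have hI : I = univ := by
    by_contra hIu
    obtain ⟨i₀, hi₀⟩ := Finite.exists_max w
    obtain ⟨a, ha, b, hb, hab⟩ := hirr I ⟨i₀, by simpa [I] using hi₀⟩ hIu
    simp only [I, mem_filter, mem_univ, true_and] at ha hb
    exact hb fun l => (ha l).trans_eq
      (apply_eq_of_isMax_of_mulVec_nonpos hoff hrow ha (hDw a ha) hab).symm
  have hmax : ∀ i l, w l ≤ w i := fun i => by simpa [I] using hI.ge (mem_univ i)
  exact le_antisymm (hmax j i) (hmax i j)

theorem apply_eq_of_mulVec_eq_zero (hirr : MatIrreducible D)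
    (hoff : ∀ i j, i ≠ j → D i j ≤ 0) (hrow : ∀ i, ∑ j, D i j = 0) {v : Fin m → ℝ}
    (hv : D *ᵥ v = 0) (i j : Fin m) : v i = v j :=
  hirr.apply_eq_of_mulVec_nonpos_at_max hoff hrow (fun i _ => by simp [hv]) i j

theorem eq_zero_of_mulVec_add_eq_zero (hirr : MatIrreducible D)
    (hoff : ∀ i j, i ≠ j → D i j ≤ 0) (hrow : ∀ i, ∑ j, D i j = 0) {t : ℝ} (ht : 0 ≤ t)
    {k : Fin m} {w : Fin m → ℝ} (hwk : w k = 0) (hw : ∀ i ≠ k, (D *ᵥ w) i + t * w i = 0) :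
    w = 0 := by
  wlog hpos : ∃ j, 0 < w j generalizing w
  · push Not at hpos
    by_contra hw0
    refine neg_ne_zero.2 hw0 (this (w := -w) (by simp [hwk]) (fun i hi => ?_) ?_)
    · simp only [mulVec_neg, Pi.neg_apply]
      linarith [hw i hi]
    · obtain ⟨j, hj⟩ := Function.ne_iff.1 hw0
      exact ⟨j, by simpa using (hpos j).lt_of_ne hj⟩
  obtain ⟨j, hj⟩ := hpos
  -- a maximizer `i` has `w i > 0`, so `i ≠ k` and `(D *ᵥ w) i = -t * w i ≤ 0`
  have hmax : ∀ i, (∀ l, w l ≤ w i) → (D *ᵥ w) i ≤ 0 := fun i hi => by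
    have hik : i ≠ k := fun h => by linarith [hi j, h ▸ hwk]
    nlinarith [hw i hik, hi j]
  linarith [hirr.apply_eq_of_mulVec_nonpos_at_max hoff hrow hmax j k]

theorem adjugate_homotopy_apply_self_ne_zero (hirr : MatIrreducible D)
    (hoff : ∀ i j, i ≠ j → D i j ≤ 0) (hrow : ∀ i, ∑ j, D i j = 0) {s : ℝ} (hs : 0 < s)
    (hs1 : s ≤ 1) (k : Fin m) :
    (s • D + (1 - s) • (1 : Matrix (Fin m) (Fin m) ℝ)).adjugate k k ≠ 0 := by
  rw [adjugate_apply]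
  intro hdet
  obtain ⟨w, hw0, hw⟩ := exists_mulVec_eq_zero_iff.2 hdet
  rw [updateRow_mulVec] at hw
  refine hw0 ((hirr.smul hs.ne').eq_zero_of_mulVec_add_eq_zero (t := 1 - s) ?_ ?_
    (sub_nonneg.2 hs1) (k := k) ?_ fun i hi => ?_)
  · intro i j hij
    simpa using mul_nonpos_of_nonneg_of_nonpos hs.le (hoff i j hij)
  · intro i
    simp [← mul_sum, hrow i]
  · simpa using congrFun hw k
  · simpa [hi, add_mulVec, smul_mulVec] using congrFun hw i

theorem adjugate_apply_self_pos (hirr : MatIrreducible D)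
    (hoff : ∀ i j, i ≠ j → D i j ≤ 0) (hrow : ∀ i, ∑ j, D i j = 0) (k : Fin m) :
    0 < D.adjugate k k := by
  set f : ℝ → ℝ := fun s => (s • D + (1 - s) • (1 : Matrix (Fin m) (Fin m) ℝ)).adjugate k k
  have hf : Continuous f := by
    refine (Continuous.matrix_adjugate ?_).matrix_elem k k
    fun_prop
  have hf0 : f 0 = 1 := by simp [f]
  have hf1 : f 1 = D.adjugate k k := by simp [f]
  by_contra hneg
  have hmem : (0 : ℝ) ∈ Set.Icc (f 1) (f 0) := ⟨by linarith, by linarith⟩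
  obtain ⟨s, ⟨hs0, hs1⟩, hfs⟩ := intermediate_value_Icc' zero_le_one hf.continuousOn hmem
  rcases hs0.eq_or_lt with rfl | hs
  · simp [hf0] at hfs
  · exact hirr.adjugate_homotopy_apply_self_ne_zero hoff hrow hs hs1 k hfs

theorem vecMul_adjugate_diag_eq_zero (hirr : MatIrreducible D)
    (hoff : ∀ i j, i ≠ j → D i j ≤ 0) (hrow : ∀ i, ∑ j, D i j = 0) :
    (fun k => D.adjugate k k) ᵥ* D = 0 := by
  ext j
  have : Nonempty (Fin m) := ⟨j⟩
  have hdet := det_eq_zero_of_sum_row_eq_zero hrow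
  have hcol : ∀ i k, D.adjugate i k = D.adjugate k k := by
    intro i k
    refine hirr.apply_eq_of_mulVec_eq_zero hoff hrow (v := fun i => D.adjugate i k) ?_ i k
    ext l
    simpa [hdet, mul_apply, mulVec, dotProduct] using congrFun (congrFun (mul_adjugate D) l) k
  simpa [hdet, mul_apply, vecMul, dotProduct, hcol j] using
    congrFun (congrFun (adjugate_mul D) j) j

end MatIrreducible

theorem exists_continuous_positive_left_kernel_general {m : ℕ}
    (E : Type*) [TopologicalSpace E]
    (D : E → Matrix (Fin m) (Fin m) ℝ)
    (hcont : ∀ i j, Continuous fun x => D x i j)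
    (hoff : ∀ x i j, i ≠ j → D x i j ≤ 0)
    (hrow : ∀ x i, ∑ j, D x i j = 0)
    (hirr : ∀ x, MatIrreducible (D x)) :
    ∃ Λ : E → Fin m → ℝ, (∀ i, Continuous fun x => Λ x i) ∧
      ∀ x, (∀ i, 0 < Λ x i) ∧ (D x).transpose.mulVec (Λ x) = 0 := by
  refine ⟨fun x k => (D x).adjugate k k,
    fun k => (continuous_matrix hcont).matrix_adjugate.matrix_elem k k, fun x => ⟨?_, ?_⟩⟩
  · exact (hirr x).adjugate_apply_self_pos (hoff x) (hrow x)
  · rw [mulVec_transpose]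
    exact (hirr x).vecMul_adjugate_diag_eq_zero (hoff x) (hrow x)

/-- For a continuous family `D(x)` of irreducible matrices with nonnegative diagonal,
nonpositive off-diagonal entries and zero row sums on a compact space `E`, there is a
continuous map `Λ : E → ℝ^m` with `Λ(x) > 0` and `D(x)ᵀ Λ(x) = 0` for all `x`. -/
theorem exists_continuous_positive_left_kernel {m : ℕ}
    (E : Type*) [TopologicalSpace E] [CompactSpace E]
    (D : E → Matrix (Fin m) (Fin m) ℝ)
    (hcont : ∀ i j, Continuous fun x => D x i j)
    (hdiag : ∀ x i, 0 ≤ D x i i)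
    (hoff : ∀ x i j, i ≠ j → D x i j ≤ 0)
    (hrow : ∀ x i, ∑ j, D x i j = 0)
    (hirr : ∀ x, MatIrreducible (D x)) :
    ∃ Λ : E → Fin m → ℝ, (∀ i, Continuous fun x => Λ x i) ∧
      ∀ x, (∀ i, 0 < Λ x i) ∧ (D x).transpose.mulVec (Λ x) = 0 :=
  exists_continuous_positive_left_kernel_general E D hcont hoff hrow hirr
end

section
/- Let D be an m×m real irreducible matrix with d_ii ≥ 0, d_ij ≤ 0 for i ≠ j and zero row sums. Then for every w_0 ∈ R^m, the solution w(t) = exp(−tD) w_0 of the linear ODE w'(t) = −D w(t) converges as t → +∞; moreover the convergence is exponential: there exist a matrix A and constants C, r > 0 such that ‖exp(−tD) − A‖ ≤ C e^{−rt} for all t ≥ 0. -/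
open NormedSpace

/-!
Shifting `-tD` by a multiple of the identity makes it entrywise nonnegative, so
`P t = exp (-tD)` is a semigroup of row-stochastic matrices, and irreducibility makes every entry
of `P 1` positive, at least `δ` say. A stochastic matrix whose entries are all `≥ δ` shrinks the
oscillation `max v - min v` of a vector by the factor `1 - mδ` (Doeblin), so the columns of
`P k` flatten out geometrically in `k`. Since a column of `P t`, `t ≥ k`, is an average of the
entries of the same column of `P k`, each entry of `P t` is Cauchy at an exponential rate.
-/

open Finset Filter Topology

theorem exists_abs_sub_le_pow_floor {f : ℝ → ℝ} {C θ : ℝ} (hθ : θ < 1)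
    (hf : ∀ (k : ℕ) (s t : ℝ), k ≤ s → k ≤ t → |f s - f t| ≤ C * θ ^ k) :
    ∃ a, ∀ t, 0 ≤ t → |f t - a| ≤ C * θ ^ ⌊t⌋₊ := by
  have hcauchy : CauchySeq fun k : ℕ => f k :=
    cauchySeq_of_le_geometric θ C hθ fun k =>
      (Real.dist_eq _ _).trans_le (hf k k (k + 1 : ℕ) le_rfl (by push_cast; linarith))
  obtain ⟨a, ha⟩ := cauchySeq_tendsto_of_complete hcauchy
  refine ⟨a, fun t ht => le_of_tendsto (tendsto_const_nhds.sub ha).abs ?_⟩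
  exact eventually_atTop.2 ⟨⌊t⌋₊, fun k hk => hf _ t k (Nat.floor_le ht) (by exact_mod_cast hk)⟩

theorem pow_floor_le_inv_mul_exp {θ : ℝ} (h0 : 0 < θ) (h1 : θ ≤ 1) (t : ℝ) :
    θ ^ ⌊t⌋₊ ≤ θ⁻¹ * Real.exp (Real.log θ * t) := by
  rw [← Real.rpow_natCast, ← Real.rpow_def_of_pos h0, inv_mul_eq_div, ← Real.rpow_sub_one h0.ne']
  exact Real.rpow_le_rpow_of_exponent_ge h0 h1 (by linarith [Nat.lt_floor_add_one t])

namespace Matrix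

theorem tendsto_of_abs_sub_le_exp {ι κ : Type*} {P : ℝ → Matrix ι κ ℝ} {A : Matrix ι κ ℝ}
    {C r : ℝ} (hr : 0 < r) (h : ∀ t, 0 ≤ t → ∀ i j, |P t i j - A i j| ≤ C * Real.exp (-r * t)) :
    Tendsto P atTop (𝓝 A) := by
  have hdecay : Tendsto (fun t => C * Real.exp (-r * t)) atTop (𝓝 0) := by
    simpa [Function.comp_def] using
      (Real.tendsto_exp_neg_atTop_nhds_zero.comp (tendsto_id.const_mul_atTop hr)).const_mul C
  refine tendsto_pi_nhds.2 fun i => tendsto_pi_nhds.2 fun j => ?_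
  refine tendsto_iff_dist_tendsto_zero.2 <|
    squeeze_zero' (Eventually.of_forall fun t => dist_nonneg) ?_ hdecay
  exact eventually_atTop.2 ⟨0, fun t ht => (Real.dist_eq _ _).trans_le (h t ht i j)⟩

section

variable {n : Type*} [Fintype n]

theorem mulVec_sub_mulVec_le {Q : Matrix n n ℝ} (hrow : ∀ i, ∑ j, Q i j = 1) {δ : ℝ}
    (hδ : ∀ i j, δ ≤ Q i j) {v : n → ℝ} {s : ℝ} (hv : ∀ j l, |v j - v l| ≤ s) (i k : n) :
    (Q *ᵥ v) i - (Q *ᵥ v) k ≤ (1 - Fintype.card n * δ) * s := by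
  have : Nonempty n := ⟨i⟩
  obtain ⟨jmax, hjmax⟩ := Finite.exists_max v
  obtain ⟨jmin, hjmin⟩ := Finite.exists_min v
  set ρ := 1 - Fintype.card n * δ
  have hsum : ∀ i, ∑ j, (Q i j - δ) = ρ := fun i => by simp [ρ, sum_sub_distrib, hrow]
  have hρ : 0 ≤ ρ := hsum i ▸ sum_nonneg fun j _ => sub_nonneg.2 (hδ i j)
  have hsplit : ∀ i, (Q *ᵥ v) i = ∑ j, (Q i j - δ) * v j + δ * ∑ j, v j := fun i => by
    simp [mulVec, dotProduct, sub_mul, sum_sub_distrib, mul_sum]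
  have hupper : ∑ j, (Q i j - δ) * v j ≤ ρ * v jmax := by
    rw [← hsum i, sum_mul]
    exact sum_le_sum fun j _ => mul_le_mul_of_nonneg_left (hjmax j) (sub_nonneg.2 (hδ i j))
  have hlower : ρ * v jmin ≤ ∑ j, (Q k j - δ) * v j := by
    rw [← hsum k, sum_mul]
    exact sum_le_sum fun j _ => mul_le_mul_of_nonneg_left (hjmin j) (sub_nonneg.2 (hδ k j))
  calc (Q *ᵥ v) i - (Q *ᵥ v) k ≤ ρ * (v jmax - v jmin) := by rw [hsplit i, hsplit k]; linarith
    _ ≤ ρ * s := mul_le_mul_of_nonneg_left ((le_abs_self _).trans (hv jmax jmin)) hρ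

theorem abs_mulVec_sub_mulVec_le {Q : Matrix n n ℝ} (hrow : ∀ i, ∑ j, Q i j = 1) {δ : ℝ}
    (hδ : ∀ i j, δ ≤ Q i j) {v : n → ℝ} {s : ℝ} (hv : ∀ j l, |v j - v l| ≤ s) (i k : n) :
    |(Q *ᵥ v) i - (Q *ᵥ v) k| ≤ (1 - Fintype.card n * δ) * s :=
  abs_sub_le_iff.mpr ⟨mulVec_sub_mulVec_le hrow hδ hv i k, mulVec_sub_mulVec_le hrow hδ hv k i⟩

variable [DecidableEq n]

theorem abs_mulVec_sub_le {Q : Matrix n n ℝ} (hQ : Q ∈ rowStochastic ℝ n) {v : n → ℝ} {s : ℝ}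
    (hv : ∀ j l, |v j - v l| ≤ s) (i k : n) : |(Q *ᵥ v) i - v k| ≤ s := by
  have hrow := sum_row_of_mem_rowStochastic hQ i
  have hexpand : (Q *ᵥ v) i - v k = ∑ l, Q i l * (v l - v k) := by
    simp only [mulVec, dotProduct, mul_sub, sum_sub_distrib, ← sum_mul, hrow, one_mul]
  calc |(Q *ᵥ v) i - v k| = |∑ l, Q i l * (v l - v k)| := by rw [hexpand]
    _ ≤ ∑ l, Q i l * |v l - v k| := by
      refine (abs_sum_le_sum_abs _ _).trans (le_of_eq (sum_congr rfl fun l _ => ?_))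
      rw [abs_mul, abs_of_nonneg (nonneg_of_mem_rowStochastic hQ)]
    _ ≤ ∑ l, Q i l * s :=
      sum_le_sum fun l _ => mul_le_mul_of_nonneg_left (hv l k) (nonneg_of_mem_rowStochastic hQ)
    _ = s := by rw [← sum_mul, hrow, one_mul]

theorem hasSum_exp (X : Matrix n n ℝ) :
    HasSum (fun k : ℕ => (k.factorial : ℝ)⁻¹ • X ^ k) (exp X) := by
  let : NormedRing (Matrix n n ℝ) := Matrix.linftyOpNormedRing
  let : NormedAlgebra ℝ (Matrix n n ℝ) := Matrix.linftyOpNormedAlgebra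
  exact exp_series_hasSum_exp' X

theorem hasSum_exp_apply (X : Matrix n n ℝ) (i j : n) :
    HasSum (fun k : ℕ => (k.factorial : ℝ)⁻¹ * (X ^ k) i j) (exp X i j) :=
  Pi.hasSum.mp (Pi.hasSum.mp (hasSum_exp X) i) j

theorem exp_mulVec_of_mulVec_eq_zero {X : Matrix n n ℝ} {v : n → ℝ} (hv : X *ᵥ v = 0) :
    exp X *ᵥ v = v := by
  let mulVecRight : Matrix n n ℝ →+ (n → ℝ) := AddMonoidHom.mk' (· *ᵥ v) (add_mulVec · · v)
  have hsum := (hasSum_exp X).map mulVecRight (continuous_id.matrix_mulVec continuous_const)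
  have hpow : ∀ k ≠ 0, X ^ k *ᵥ v = 0 := fun k hk => by
    obtain ⟨k, rfl⟩ := Nat.exists_eq_succ_of_ne_zero hk
    rw [pow_succ, ← mulVec_mulVec, hv, mulVec_zero]
  refine (hsum.unique (hasSum_single 0 fun k hk => ?_)).trans ?_
  · simp [mulVecRight, smul_mulVec, hpow k hk]
  · simp [mulVecRight]

theorem exp_apply_nonneg {X : Matrix n n ℝ} (hX : ∀ i j, 0 ≤ X i j) (i j : n) :
    0 ≤ exp X i j :=
  (hasSum_exp_apply X i j).nonneg fun k => mul_nonneg (by positivity) (pow_apply_nonneg hX k i j)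

theorem exp_apply_pos_of_pow_apply_pos {X : Matrix n n ℝ} (hX : ∀ i j, 0 ≤ X i j) {k : ℕ}
    {i j : n} (hk : 0 < (X ^ k) i j) : 0 < exp X i j :=
  (mul_pos (by positivity) hk).trans_le <| le_hasSum (hasSum_exp_apply X i j) k fun l _ =>
    mul_nonneg (by positivity) (pow_apply_nonneg hX l i j)

theorem exp_add_smul_one (X : Matrix n n ℝ) (c : ℝ) :
    exp (X + c • 1) = Real.exp c • exp X := by
  rw [exp_add_of_commute _ _ ((Commute.one_right X).smul_right c), smul_one_eq_diagonal,
    exp_diagonal]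
  ext i j
  simp [Real.exp_eq_exp_ℝ, mul_comm]

theorem exists_add_smul_one_nonneg {X : Matrix n n ℝ} (hX : ∀ i j, i ≠ j → 0 ≤ X i j) :
    ∃ c : ℝ, ∀ i j, 0 ≤ (X + c • 1) i j := by
  refine ⟨∑ k, |X k k|, fun i j => ?_⟩
  rcases eq_or_ne i j with rfl | hij
  · have := single_le_sum (fun k _ => abs_nonneg (X k k)) (mem_univ i)
    simp only [add_apply, smul_apply, one_apply_eq, smul_eq_mul, mul_one]
    linarith [neg_abs_le (X i i)]
  · simpa [one_apply_ne hij] using hX i j hij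

theorem exp_mem_rowStochastic {X : Matrix n n ℝ} (hX : ∀ i j, i ≠ j → 0 ≤ X i j)
    (hrow : X *ᵥ 1 = 0) : exp X ∈ rowStochastic ℝ n := by
  obtain ⟨c, hc⟩ := exists_add_smul_one_nonneg hX
  refine mem_rowStochastic.mpr ⟨fun i j => ?_, exp_mulVec_of_mulVec_eq_zero hrow⟩
  have h := exp_apply_nonneg hc i j
  rw [exp_add_smul_one, smul_apply, smul_eq_mul] at h
  exact nonneg_of_mul_nonneg_right h (Real.exp_pos c)

theorem exists_pow_apply_pos {R : Type*} [Semiring R] [LinearOrder R] [IsStrictOrderedRing R]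
    {B : Matrix n n R} (hB : ∀ i j, 0 ≤ B i j)
    (hcut : ∀ I : Finset n, I.Nonempty → I ≠ univ → ∃ i ∈ I, ∃ j ∉ I, 0 < B i j) (i j : n) :
    ∃ k, 0 < (B ^ k) i j := by
  classical
  let reachable : Finset n := {j | ∃ k, 0 < (B ^ k) i j}
  suffices hall : reachable = univ by
    have hj : j ∈ reachable := hall ▸ mem_univ j
    simpa [reachable] using hj
  by_contra hne
  have hi : i ∈ reachable := mem_filter.mpr ⟨mem_univ i, 0, by simp⟩
  obtain ⟨a, ha, b, hb, hab⟩ := hcut reachable ⟨i, hi⟩ hne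
  obtain ⟨k, hk⟩ := (mem_filter.mp ha).2
  refine hb (mem_filter.mpr ⟨mem_univ b, k + 1, ?_⟩)
  rw [pow_succ, mul_apply]
  exact (mul_pos hk hab).trans_le <| single_le_sum (f := fun l => (B ^ k) i l * B l b)
    (fun l _ => mul_nonneg (pow_apply_nonneg hB k i l) (hB l b)) (mem_univ a)

theorem exp_apply_pos {X : Matrix n n ℝ} (hX : ∀ i j, i ≠ j → 0 ≤ X i j)
    (hcut : ∀ I : Finset n, I.Nonempty → I ≠ univ → ∃ i ∈ I, ∃ j ∉ I, 0 < X i j) (i j : n) :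
    0 < exp X i j := by
  obtain ⟨c, hc⟩ := exists_add_smul_one_nonneg hX
  have hcut' : ∀ I : Finset n, I.Nonempty → I ≠ univ → ∃ i ∈ I, ∃ j ∉ I, 0 < (X + c • 1) i j := by
    intro I hI hIu
    obtain ⟨a, ha, b, hb, hab⟩ := hcut I hI hIu
    have hne : a ≠ b := fun h => hb (h ▸ ha)
    exact ⟨a, ha, b, hb, by simpa [one_apply_ne hne] using hab⟩
  obtain ⟨k, hk⟩ := exists_pow_apply_pos hc hcut' i j
  have h := exp_apply_pos_of_pow_apply_pos hc hk
  rw [exp_add_smul_one, smul_apply, smul_eq_mul] at h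
  exact pos_of_mul_pos_right h (Real.exp_pos c).le

structure IsStochasticSemigroup (P : ℝ → Matrix n n ℝ) : Prop where
  stochastic : ∀ t, 0 ≤ t → P t ∈ rowStochastic ℝ n
  map_add : ∀ s t, 0 ≤ s → 0 ≤ t → P (s + t) = P s * P t

theorem isStochasticSemigroup_exp_neg_smul {D : Matrix n n ℝ} (hoff : ∀ i j, i ≠ j → D i j ≤ 0)
    (hrow : D *ᵥ 1 = 0) : IsStochasticSemigroup fun t => exp ((-t) • D) where
  stochastic t ht := exp_mem_rowStochastic
    (fun i j hij => mul_nonneg_of_nonpos_of_nonpos (neg_nonpos.2 ht) (hoff i j hij))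
    (by rw [smul_mulVec, hrow, smul_zero])
  map_add s t _ _ := by
    rw [neg_add, add_smul, exp_add_of_commute _ _ (((Commute.refl D).smul_left _).smul_right _)]

namespace IsStochasticSemigroup

variable {P : ℝ → Matrix n n ℝ}

theorem abs_apply_sub_apply_le_pow (hP : IsStochasticSemigroup P) {δ θ : ℝ}
    (hδ : ∀ i j, δ ≤ P 1 i j) (hθ : 1 - Fintype.card n * δ ≤ θ) (hθ0 : 0 ≤ θ) (k : ℕ) (i l j : n) :
    |P k i j - P k l j| ≤ θ ^ k := by
  induction k generalizing i l with
  | zero =>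
    have h0 := hP.stochastic 0 le_rfl
    simpa using abs_sub_le_of_nonneg_of_le (nonneg_of_mem_rowStochastic h0)
      (le_one_of_mem_rowStochastic h0) (nonneg_of_mem_rowStochastic h0)
      (le_one_of_mem_rowStochastic h0)
  | succ k ih =>
    have hcol : ∀ i, P (k + 1 : ℕ) i j = (P 1 *ᵥ fun i => P k i j) i := fun i => by
      rw [Nat.cast_succ, add_comm, hP.map_add 1 k zero_le_one k.cast_nonneg]
      rfl
    rw [hcol, hcol, pow_succ']
    exact (abs_mulVec_sub_mulVec_le (sum_row_of_mem_rowStochastic (hP.stochastic 1 zero_le_one))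
      hδ ih i l).trans (mul_le_mul_of_nonneg_right hθ (pow_nonneg hθ0 k))

theorem abs_apply_sub_apply_le_two_mul_pow (hP : IsStochasticSemigroup P) {δ θ : ℝ}
    (hδ : ∀ i j, δ ≤ P 1 i j) (hθ : 1 - Fintype.card n * δ ≤ θ) (hθ0 : 0 ≤ θ) (i j : n) (k : ℕ)
    (s t : ℝ) (hs : k ≤ s) (ht : k ≤ t) : |P s i j - P t i j| ≤ 2 * θ ^ k := by
  have hclose : ∀ u, (k : ℝ) ≤ u → |P u i j - P k i j| ≤ θ ^ k := fun u hu => by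
    have hcol : P u i j = (P (u - k) *ᵥ fun i => P k i j) i := by
      rw [show P u = P (u - k) * P k by
        rw [← hP.map_add _ _ (sub_nonneg.2 hu) k.cast_nonneg, sub_add_cancel]]
      rfl
    rw [hcol]
    exact abs_mulVec_sub_le (hP.stochastic _ (sub_nonneg.2 hu))
      (hP.abs_apply_sub_apply_le_pow hδ hθ hθ0 k · · j) i i
  calc |P s i j - P t i j| ≤ |P s i j - P k i j| + |P k i j - P t i j| := abs_sub_le _ _ _
    _ = |P s i j - P k i j| + |P t i j - P k i j| := by rw [abs_sub_comm (P k i j)]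
    _ ≤ 2 * θ ^ k := by linarith [hclose s hs, hclose t ht]

theorem exists_abs_apply_sub_le_exp [Nonempty n] (hP : IsStochasticSemigroup P)
    (hpos : ∀ i j, 0 < P 1 i j) :
    ∃ (A : Matrix n n ℝ) (C r : ℝ), 0 < C ∧ 0 < r ∧
      ∀ t, 0 ≤ t → ∀ i j, |P t i j - A i j| ≤ C * Real.exp (-r * t) := by
  obtain ⟨⟨i₀, j₀⟩, hmin⟩ := Finite.exists_min fun p : n × n => P 1 p.1 p.2
  -- the Doeblin factor `1 - card n * δ` may vanish; `1 / 2` keeps `log θ` finite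
  set θ := max (1 - Fintype.card n * P 1 i₀ j₀) (1 / 2)
  have hθ0 : 0 < θ := lt_max_of_lt_right one_half_pos
  have hθ1 : θ < 1 :=
    max_lt (sub_lt_self _ (mul_pos (Nat.cast_pos.2 Fintype.card_pos) (hpos i₀ j₀))) one_half_lt_one
  choose A hA using fun i j => exists_abs_sub_le_pow_floor hθ1 <|
    hP.abs_apply_sub_apply_le_two_mul_pow (fun i j => hmin (i, j)) (le_max_left _ _) hθ0.le i j
  refine ⟨of A, 2 * θ⁻¹, -Real.log θ, by positivity, neg_pos.2 (Real.log_neg hθ0 hθ1),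
    fun t ht i j => ?_⟩
  calc |P t i j - A i j| ≤ 2 * θ ^ ⌊t⌋₊ := hA i j t ht
    _ ≤ 2 * (θ⁻¹ * Real.exp (Real.log θ * t)) := by
      gcongr
      exact pow_floor_le_inv_mul_exp hθ0 hθ1.le t
    _ = 2 * θ⁻¹ * Real.exp (-(-Real.log θ) * t) := by rw [neg_neg, mul_assoc]

end IsStochasticSemigroup

end

end Matrix

open Matrix in
theorem expNegD_tendsto_of_irreducible_general {m : ℕ}
    (D : Matrix (Fin m) (Fin m) ℝ)
    (hoff : ∀ i j, i ≠ j → D i j ≤ 0)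
    (hrow : ∀ i, ∑ j, D i j = 0)
    (hirr : MatIrreducible D) :
    ∃ (A : Matrix (Fin m) (Fin m) ℝ) (C r : ℝ), 0 < C ∧ 0 < r ∧
      (∀ t : ℝ, 0 ≤ t → ∀ i j,
        |(exp ((-t) • D)) i j - A i j| ≤ C * Real.exp (-r * t)) ∧
      (∀ w₀ : Fin m → ℝ,
        Filter.Tendsto (fun t : ℝ => (exp ((-t) • D)).mulVec w₀)
          Filter.atTop (nhds (A.mulVec w₀))) := by
  rcases isEmpty_or_nonempty (Fin m) with hm | hm
  · exact ⟨0, 1, 1, one_pos, one_pos, fun _ _ i => isEmptyElim i,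
      fun _ => tendsto_const_nhds.congr fun _ => Subsingleton.elim _ _⟩
  have hP := isStochasticSemigroup_exp_neg_smul hoff (by ext i; simp [mulVec, dotProduct, hrow])
  have hpos : ∀ i j, 0 < exp ((-1 : ℝ) • D) i j := by
    refine exp_apply_pos (fun i j hij => by simpa using hoff i j hij) fun I hI hIu => ?_
    obtain ⟨i, hi, j, hj, hij⟩ := hirr I hI hIu
    have hne : i ≠ j := fun h => hj (h ▸ hi)
    exact ⟨i, hi, j, hj, by simpa using lt_of_le_of_ne (hoff i j hne) hij⟩
  obtain ⟨A, C, r, hC, hr, hbound⟩ := hP.exists_abs_apply_sub_le_exp hpos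
  exact ⟨A, C, r, hC, hr, hbound, fun w₀ => ((continuous_id.matrix_mulVec continuous_const).tendsto
    A).comp (tendsto_of_abs_sub_le_exp hr hbound)⟩

/-- For an irreducible matrix `D` with nonnegative diagonal, nonpositive off-diagonal
entries and zero row sums, `exp(-tD)` converges exponentially fast (entrywise) to some
matrix `A` as `t → ∞`; in particular every solution `w(t) = exp(-tD) w₀` of
`w' = -Dw` converges. -/
theorem expNegD_tendsto_of_irreducible {m : ℕ}
    (D : Matrix (Fin m) (Fin m) ℝ)
    (hdiag : ∀ i, 0 ≤ D i i)
    (hoff : ∀ i j, i ≠ j → D i j ≤ 0)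
    (hrow : ∀ i, ∑ j, D i j = 0)
    (hirr : MatIrreducible D) :
    ∃ (A : Matrix (Fin m) (Fin m) ℝ) (C r : ℝ), 0 < C ∧ 0 < r ∧
      (∀ t : ℝ, 0 ≤ t → ∀ i j,
        |(exp ((-t) • D)) i j - A i j| ≤ C * Real.exp (-r * t)) ∧
      (∀ w₀ : Fin m → ℝ,
        Filter.Tendsto (fun t : ℝ => (exp ((-t) • D)).mulVec w₀)
          Filter.atTop (nhds (A.mulVec w₀))) :=
  expNegD_tendsto_of_irreducible_general D hoff hrow hirr
end

section
/- Let D be an m×m real irreducible matrix with d_ii ≥ 0, d_ij ≤ 0 for i ≠ j, zero row sums, and let Λ > 0 satisfy Dᵀ Λ = 0. Then the image of D equals the orthogonal complement of Λ, i.e., im(D) = {y ∈ R^m : ⟨Λ, y⟩ = 0}. -/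
/-!
Writing `(D u)_i = ∑_k D_ik (u_k - u_i)`, a maximum principle shows that every `u` with `D u = 0`
is constant: the set where `u` attains its maximum cannot be left along a nonzero entry of `D`,
so by irreducibility it is everything. Hence `ker D = ℝ 𝟙` and `D` has rank `m - 1`. On the
other hand `⟨Λ, D u⟩ = ⟨Dᵀ Λ, u⟩ = 0`, so `im D` lies in the hyperplane `Λ^⊥`, which also has
dimension `m - 1`.
-/

open Matrix Module

section MaximumPrinciple

variable {ι : Type*} [Fintype ι] {D : Matrix ι ι ℝ}

lemma mulVec_apply_eq_sum_mul_sub (hrow : ∀ i, ∑ j, D i j = 0) (u : ι → ℝ) (i : ι) :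
    (D *ᵥ u) i = ∑ k, D i k * (u k - u i) := by
  simp only [mul_sub, Finset.sum_sub_distrib, ← Finset.sum_mul, hrow, zero_mul, sub_zero]
  rfl

lemma eq_of_mulVec_apply_eq_zero_of_isMax (hoff : ∀ i j, i ≠ j → D i j ≤ 0)
    (hrow : ∀ i, ∑ j, D i j = 0) {u : ι → ℝ} {i j : ι} (hu : (D *ᵥ u) i = 0)
    (hmax : ∀ k, u k ≤ u i) (hij : D i j ≠ 0) : u j = u i := by
  have hnonneg : ∀ k ∈ Finset.univ, 0 ≤ D i k * (u k - u i) := by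
    intro k _
    rcases eq_or_ne i k with rfl | hik
    · simp
    · exact mul_nonneg_of_nonpos_of_nonpos (hoff i k hik) (sub_nonpos.mpr (hmax k))
  rw [mulVec_apply_eq_sum_mul_sub hrow] at hu
  have hj := (Finset.sum_eq_zero_iff_of_nonneg hnonneg).mp hu j (Finset.mem_univ j)
  exact sub_eq_zero.mp ((mul_eq_zero.mp hj).resolve_left hij)

end MaximumPrinciple

lemma range_mulVecLin_le_ker_dotProduct {ι : Type*} [Fintype ι] [DecidableEq ι]
    {D : Matrix ι ι ℝ} {Λ : ι → ℝ} (hker : Dᵀ *ᵥ Λ = 0) :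
    LinearMap.range D.mulVecLin ≤ LinearMap.ker (dotProductEquiv ℝ ι Λ) := by
  rintro _ ⟨u, rfl⟩
  change Λ ⬝ᵥ (D *ᵥ u) = 0
  rw [dotProduct_mulVec, ← mulVec_transpose, hker, zero_dotProduct]

namespace MatIrreducible

variable {m : ℕ} {D : Matrix (Fin m) (Fin m) ℝ}

lemma ker_mulVecLin_eq_span_one (hirr : MatIrreducible D) (hoff : ∀ i j, i ≠ j → D i j ≤ 0)
    (hrow : ∀ i, ∑ j, D i j = 0) : LinearMap.ker D.mulVecLin = ℝ ∙ 1 := by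
  refine le_antisymm (fun u hu => ?_) ?_
  · rcases isEmpty_or_nonempty (Fin m) with _ | _
    · simp [Subsingleton.elim u 0]
    obtain ⟨i₀, hi₀⟩ := Finite.exists_max u
    have hmax : Finset.univ.filter (fun i => u i = u i₀) = Finset.univ := by
      by_contra hne
      obtain ⟨i, hi, j, hj, hij⟩ := hirr _ ⟨i₀, by simp⟩ hne
      simp only [Finset.mem_filter, Finset.mem_univ, true_and] at hi hj
      exact hj ((eq_of_mulVec_apply_eq_zero_of_isMax hoff hrow (congrFun hu i)
        (fun k => hi ▸ hi₀ k) hij).trans hi)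
    refine Submodule.mem_span_singleton.mpr ⟨u i₀, funext fun i => ?_⟩
    simpa using (Finset.filter_eq_self.mp hmax i (Finset.mem_univ i)).symm
  · rw [Submodule.span_singleton_le_iff_mem, LinearMap.mem_ker, mulVecLin_apply]
    funext i
    simpa [mulVec, dotProduct] using hrow i

lemma finrank_range_mulVecLin_add_one [NeZero m] (hirr : MatIrreducible D)
    (hoff : ∀ i j, i ≠ j → D i j ≤ 0) (hrow : ∀ i, ∑ j, D i j = 0) :
    finrank ℝ (LinearMap.range D.mulVecLin) + 1 = m := by
  have hker : finrank ℝ (LinearMap.ker D.mulVecLin) = 1 := by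
    rw [hirr.ker_mulVecLin_eq_span_one hoff hrow, finrank_span_singleton one_ne_zero]
  simpa [hker] using D.mulVecLin.finrank_range_add_finrank_ker

end MatIrreducible

theorem image_eq_lambda_perp_general {m : ℕ}
    (D : Matrix (Fin m) (Fin m) ℝ)
    (hoff : ∀ i j, i ≠ j → D i j ≤ 0)
    (hrow : ∀ i, ∑ j, D i j = 0)
    (hirr : MatIrreducible D)
    (Λ : Fin m → ℝ) (hΛ : ∀ i, 0 < Λ i)
    (hker : D.transpose.mulVec Λ = 0) :
    {y : Fin m → ℝ | ∃ u : Fin m → ℝ, D.mulVec u = y} =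
      {y : Fin m → ℝ | ∑ i, Λ i * y i = 0} := by
  rcases Nat.eq_zero_or_pos m with rfl | hm
  · ext y
    simp [Subsingleton.elim y 0]
  have : NeZero m := ⟨hm.ne'⟩
  have hΛ0 : dotProductEquiv ℝ (Fin m) Λ ≠ 0 :=
    (LinearEquiv.map_ne_zero_iff _).mpr fun h => (hΛ 0).ne' (congrFun h 0)
  have hrange : LinearMap.range D.mulVecLin = LinearMap.ker (dotProductEquiv ℝ (Fin m) Λ) := by
    refine Submodule.eq_of_le_of_finrank_eq (range_mulVecLin_le_ker_dotProduct hker) ?_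
    have hhyperplane := Module.Dual.finrank_ker_add_one_of_ne_zero hΛ0
    have hrank := hirr.finrank_range_mulVecLin_add_one hoff hrow
    simp only [finrank_fin_fun] at hhyperplane
    omega
  ext y
  exact SetLike.ext_iff.mp hrange y

/-- For an irreducible matrix `D` with nonnegative diagonal, nonpositive off-diagonal
entries, zero row sums, and `Λ > 0` with `Dᵀ Λ = 0`, the image of `D` is the orthogonal
complement of `Λ`. -/
theorem image_eq_lambda_perp {m : ℕ}
    (D : Matrix (Fin m) (Fin m) ℝ)
    (hdiag : ∀ i, 0 ≤ D i i)
    (hoff : ∀ i j, i ≠ j → D i j ≤ 0)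
    (hrow : ∀ i, ∑ j, D i j = 0)
    (hirr : MatIrreducible D)
    (Λ : Fin m → ℝ) (hΛ : ∀ i, 0 < Λ i)
    (hker : D.transpose.mulVec Λ = 0) :
    {y : Fin m → ℝ | ∃ u : Fin m → ℝ, D.mulVec u = y} =
      {y : Fin m → ℝ | ∑ i, Λ i * y i = 0} :=
  image_eq_lambda_perp_general D hoff hrow hirr Λ hΛ hker
end

section
/- The pair u(x,t) = (sin(x − t), sin(x − t)) is a classical solution of the system ∂u₁/∂t + |Du₁ + α| + u₁ − u₂ = α, ∂u₂/∂t + |Du₂ + β| − u₁ + u₂ = β on R × (0,∞) with initial data u₁(x,0) = u₂(x,0) = sin x, provided α, β > 1. Consequently u(·, t) does not converge as t → ∞. -/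
/-! Since `|cos| ≤ 1 ≤ γ`, the absolute value opens with a plus sign, so each equation reduces to
the transport equation `∂ₜu + ∂ₓu = 0`, which every travelling wave `u(x - t)` solves; and a
periodic function of `t` with a limit at `+∞` is constant, which `sin (x - t)` is not. -/

open Filter Topology Real

theorem Function.Periodic.eq_of_tendsto_atTop {R X : Type*} [Field R] [LinearOrder R]
    [IsStrictOrderedRing R] [Archimedean R] [TopologicalSpace X] [T2Space X] {f : R → X}
    {c : R} {L : X} (hf : f.Periodic c) (hc : 0 < c) (hL : Tendsto f atTop (𝓝 L)) (t : R) :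
    f t = L := by
  have hshift : Tendsto (fun n : ℕ => t + n * c) atTop atTop :=
    tendsto_atTop_add_const_left _ t <|
      tendsto_natCast_atTop_atTop.atTop_mul_const hc
  refine tendsto_nhds_unique ?_ (hL.comp hshift)
  simpa only [Function.comp_def, hf.nat_mul _ t] using tendsto_const_nhds

theorem not_tendsto_sin_const_sub_atTop (x L : ℝ) :
    ¬ Tendsto (fun t => sin (x - t)) atTop (𝓝 L) := fun hL => by
  have hper : (fun t => sin (x - t)).Periodic (2 * π) := sin_periodic.const_sub x
  have hcrest := hper.eq_of_tendsto_atTop two_pi_pos hL (x - π / 2)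
  have htrough := hper.eq_of_tendsto_atTop two_pi_pos hL (x + π / 2)
  simp only [sub_sub_cancel, sub_add_cancel_left, sin_neg, sin_pi_div_two] at hcrest htrough
  linarith

theorem sin_sub_hamiltonJacobi {γ : ℝ} (hγ : 1 ≤ γ) (x t : ℝ) :
    deriv (fun s => sin (x - s)) t + |deriv (fun y => sin (y - t)) x + γ| = γ := by
  rw [deriv_comp_const_sub, deriv_comp_sub_const, Real.deriv_sin,
    abs_of_nonneg (by linarith [neg_one_le_cos (x - t)])]
  ring

/-- For `α, β > 1`, `u₁(x,t) = u₂(x,t) = sin(x - t)` is a classical solution of the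
weakly coupled system `∂ₜu₁ + |∂ₓu₁ + α| + u₁ - u₂ = α`,
`∂ₜu₂ + |∂ₓu₂ + β| - u₁ + u₂ = β` with initial data `sin x`, and it does not converge
as `t → ∞`. -/
theorem counterexample_no_convergence (α β : ℝ) (hα : 1 < α) (hβ : 1 < β) :
    (∀ x t : ℝ,
      deriv (fun s => Real.sin (x - s)) t
        + |deriv (fun y => Real.sin (y - t)) x + α|
        + Real.sin (x - t) - Real.sin (x - t) = α) ∧
    (∀ x t : ℝ,
      deriv (fun s => Real.sin (x - s)) t
        + |deriv (fun y => Real.sin (y - t)) x + β|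
        - Real.sin (x - t) + Real.sin (x - t) = β) ∧
    (∀ x : ℝ, Real.sin (x - 0) = Real.sin x) ∧
    ¬ ∃ uLim : ℝ → ℝ, ∀ x : ℝ,
        Filter.Tendsto (fun t : ℝ => Real.sin (x - t)) Filter.atTop (nhds (uLim x)) := by
  refine ⟨fun x t => ?_, fun x t => ?_, fun x => by rw [sub_zero], ?_⟩
  · rw [add_sub_cancel_right, sin_sub_hamiltonJacobi hα.le]
  · rw [sub_add_cancel, sin_sub_hamiltonJacobi hβ.le]
  · rintro ⟨uLim, hu⟩
    exact not_tendsto_sin_const_sub_atTop 0 (uLim 0) (hu 0)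
end
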